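/- arXiv:2106.12395 — 2 statements merged into one kernel-verified Lean document; each statement's English description precedes it below -/
import Mathlib

section
/- Let $\mu,\nu$ be probability measures on $\mathbb{R}$ with finite first moments and let $\pi$ be a martingale coupling of $\mu$ and $\nu$ with disintegration $(\pi_x)$. Then the following are equivalent: (i) $\mathcal{W}_1(\pi_x,\pi_y) \le |x-y|$ for $\mu\otimes\mu$-a.e. $(x,y)$; (ii) for $\mu\otimes\mu$-a.e. $(x,y)$ with $x \le y$, $\pi_x$ is dominated by $\pi_y$ in first-order stochastic dominance. -/
/-!
For a martingale kernel the means of `κ x` and `κ y` are `x` and `y`, and every coupling of two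
integrable laws costs at least the difference of their means. So the Lipschitz condition says
that, for `x ≤ y`, the cost of transporting `κ x` to `κ y` attains this lower bound, and that
happens exactly when `κ x ⪯ κ y`. If `κ x ⪯ κ y`, the quantile coupling keeps `X ≤ Y`, so its cost
is `E Y - E X`. Conversely, for a nondecreasing 1-Lipschitz `f`, the function `t - 2 f t` is
still 1-Lipschitz, and testing couplings against it gives
`W₁ ≥ E Y - E X + 2 (∫ f d(κ x) - ∫ f d(κ y))`; ramps `f` approximate the indicators of `[a, ∞)`.
-/

open MeasureTheory ProbabilityTheory Set Filter Topology

noncomputable def W1 (α β : Measure ℝ) : ENNReal :=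
  sInf { c | ∃ γ : Measure (ℝ × ℝ),
    γ.map Prod.fst = α ∧ γ.map Prod.snd = β ∧ c = ∫⁻ p, edist p.1 p.2 ∂γ }

-- Meaningful only for `t ∈ (0, 1)`; elsewhere `sInf` returns a junk value.
noncomputable def quantile (m : Measure ℝ) (t : ℝ) : ℝ :=
  sInf {x | t ≤ cdf m x}

section Quantile

variable {m : Measure ℝ}

theorem quantile_le_iff {t x : ℝ} (ht : t ∈ Ioo 0 1) : quantile m t ≤ x ↔ t ≤ cdf m x := by
  have hne : {x | t ≤ cdf m x}.Nonempty :=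
    ((tendsto_cdf_atTop m).eventually (eventually_ge_nhds ht.2)).exists
  have hbdd : BddBelow {x | t ≤ cdf m x} := by
    obtain ⟨z, hz⟩ :=
      ((tendsto_cdf_atBot m).eventually (eventually_lt_nhds ht.1)).exists_forall_of_atBot
    exact ⟨z, fun y hy => le_of_not_gt fun hyz => (hz y hyz.le).not_ge hy⟩
  refine ⟨fun h => ?_, fun h => csInf_le hbdd h⟩
  have hright : ∀ y > x, t ≤ cdf m y := fun y hy => by
    obtain ⟨s, hs, hsy⟩ := (csInf_lt_iff hbdd hne).1 (h.trans_lt hy)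
    exact hs.trans (monotone_cdf m hsy.le)
  exact ge_of_tendsto (((cdf m).right_continuous x).tendsto.mono_left
    (nhdsWithin_mono x Ioi_subset_Ici_self)) (eventually_mem_nhdsWithin.mono hright)

theorem monotoneOn_quantile : MonotoneOn (quantile m) (Ioo 0 1) := fun _ hs _ ht hst =>
  (quantile_le_iff hs).2 (hst.trans ((quantile_le_iff ht).1 le_rfl))

theorem aemeasurable_quantile : AEMeasurable (quantile m) (volume.restrict (Ioo 0 1)) :=
  aemeasurable_restrict_of_monotoneOn measurableSet_Ioo monotoneOn_quantile

theorem map_quantile [IsProbabilityMeasure m] :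
    (volume.restrict (Ioo 0 1)).map (quantile m) = m := by
  refine (Measure.ext_of_Iic _ _ fun x => ?_).symm
  rw [Measure.map_apply_of_aemeasurable aemeasurable_quantile measurableSet_Iic,
    Measure.restrict_apply' measurableSet_Ioo]
  have hpre : quantile m ⁻¹' Iic x ∩ Ioo 0 1 = Iic (cdf m x) ∩ Ioo 0 1 :=
    Set.ext fun t => and_congr_left fun ht => quantile_le_iff ht
  rw [hpre, measure_congr ((ae_eq_refl _).inter Ioo_ae_eq_Ioc), inter_comm, Ioc_inter_Iic,
    min_eq_right (cdf_le_one m x), Real.volume_Ioc, sub_zero, ofReal_cdf]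

end Quantile

theorem LipschitzWith.integrable_of_integrable_id {μ : Measure ℝ} [IsFiniteMeasure μ]
    {K : NNReal} {g : ℝ → ℝ} (hg : LipschitzWith K g) (hμ : Integrable (fun x => x) μ) :
    Integrable g μ := by
  refine ((integrable_const ‖g 0‖).add (hμ.norm.const_mul K)).mono'
    hg.continuous.aestronglyMeasurable (ae_of_all _ fun x => ?_)
  have := hg.norm_sub_le x 0
  rw [sub_zero] at this
  simp only [Pi.add_apply]
  linarith [norm_le_insert' (g x) (g 0)]

theorem integral_comp_snd_sub_comp_fst {γ : Measure (ℝ × ℝ)} {α β : Measure ℝ} {g : ℝ → ℝ}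
    (h1 : γ.map Prod.fst = α) (h2 : γ.map Prod.snd = β)
    (hα : Integrable g α) (hβ : Integrable g β) :
    ∫ p, (g p.2 - g p.1) ∂γ = ∫ x, g x ∂β - ∫ x, g x ∂α := by
  subst h1 h2
  have hβ' : Integrable (fun p : ℝ × ℝ => g p.2) γ := hβ.comp_measurable measurable_snd
  have hα' : Integrable (fun p : ℝ × ℝ => g p.1) γ := hα.comp_measurable measurable_fst
  rw [integral_sub hβ' hα',
    integral_map measurable_snd.aemeasurable hβ.aestronglyMeasurable,
    integral_map measurable_fst.aemeasurable hα.aestronglyMeasurable]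

theorem W1_comm (α β : Measure ℝ) : W1 α β = W1 β α := by
  suffices h : ∀ α β : Measure ℝ, W1 α β ≤ W1 β α from le_antisymm (h α β) (h β α)
  intro α β
  refine le_sInf ?_
  rintro _ ⟨γ, h1, h2, rfl⟩
  refine sInf_le ⟨γ.map Prod.swap, ?_, ?_, ?_⟩
  · rwa [Measure.map_map measurable_fst measurable_swap]
  · rwa [Measure.map_map measurable_snd measurable_swap]
  · rw [lintegral_map (measurable_fst.edist measurable_snd) measurable_swap]
    exact lintegral_congr fun p => edist_comm _ _

theorem ofReal_integral_sub_le_W1 {α β : Measure ℝ} [IsFiniteMeasure α] [IsFiniteMeasure β]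
    (hα : Integrable (fun x => x) α) (hβ : Integrable (fun x => x) β)
    {g : ℝ → ℝ} (hg : LipschitzWith 1 g) :
    ENNReal.ofReal (∫ x, g x ∂β - ∫ x, g x ∂α) ≤ W1 α β := by
  refine le_sInf ?_
  rintro _ ⟨γ, h1, h2, rfl⟩
  rw [← integral_comp_snd_sub_comp_fst h1 h2 (hg.integrable_of_integrable_id hα)
    (hg.integrable_of_integrable_id hβ)]
  calc ENNReal.ofReal (∫ p, (g p.2 - g p.1) ∂γ)
      ≤ ‖∫ p, (g p.2 - g p.1) ∂γ‖ₑ := Real.ofReal_le_enorm _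
    _ ≤ ∫⁻ p, ‖g p.2 - g p.1‖ₑ ∂γ := enorm_integral_le_lintegral_enorm _
    _ ≤ ∫⁻ p, edist p.1 p.2 ∂γ := lintegral_mono fun p => by
        rw [edist_comm]
        simpa [edist_eq_enorm_sub] using hg.edist_le_mul p.2 p.1

theorem W1_le_of_ae_fst_le_snd {α β : Measure ℝ} (γ : Measure (ℝ × ℝ))
    (h1 : γ.map Prod.fst = α) (h2 : γ.map Prod.snd = β) (hle : ∀ᵐ p ∂γ, p.1 ≤ p.2)
    (hα : Integrable (fun x => x) α) (hβ : Integrable (fun x => x) β) :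
    W1 α β ≤ ENNReal.ofReal (∫ x, x ∂β - ∫ x, x ∂α) := by
  have hint : Integrable (fun p : ℝ × ℝ => p.2 - p.1) γ :=
    ((h2 ▸ hβ).comp_measurable measurable_snd).sub ((h1 ▸ hα).comp_measurable measurable_fst)
  calc W1 α β ≤ ∫⁻ p, edist p.1 p.2 ∂γ := sInf_le ⟨γ, h1, h2, rfl⟩
    _ = ∫⁻ p, ENNReal.ofReal (p.2 - p.1) ∂γ := lintegral_congr_ae <| hle.mono fun p hp => by
        dsimp only
        rw [edist_dist, Real.dist_eq, abs_sub_comm, abs_of_nonneg (sub_nonneg.2 hp)]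
    _ = ENNReal.ofReal (∫ p, (p.2 - p.1) ∂γ) :=
        (ofReal_integral_eq_lintegral_ofReal hint (hle.mono fun p hp => sub_nonneg.2 hp)).symm
    _ = ENNReal.ofReal (∫ x, x ∂β - ∫ x, x ∂α) := by
        rw [← integral_comp_snd_sub_comp_fst (g := fun x => x) h1 h2 hα hβ]

theorem W1_le_of_cdf_le {α β : Measure ℝ} [IsProbabilityMeasure α] [IsProbabilityMeasure β]
    (hα : Integrable (fun x => x) α) (hβ : Integrable (fun x => x) β)
    (h : ∀ x, cdf β x ≤ cdf α x) :
    W1 α β ≤ ENNReal.ofReal (∫ x, x ∂β - ∫ x, x ∂α) := by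
  have hq : AEMeasurable (fun t => (quantile α t, quantile β t)) (volume.restrict (Ioo 0 1)) :=
    aemeasurable_quantile.prodMk aemeasurable_quantile
  refine W1_le_of_ae_fst_le_snd ((volume.restrict (Ioo 0 1)).map
    fun t => (quantile α t, quantile β t)) ?_ ?_ ?_ hα hβ
  · rw [AEMeasurable.map_map_of_aemeasurable measurable_fst.aemeasurable hq]
    exact map_quantile
  · rw [AEMeasurable.map_map_of_aemeasurable measurable_snd.aemeasurable hq]
    exact map_quantile
  · rw [ae_map_iff hq (measurableSet_le measurable_fst measurable_snd)]
    filter_upwards [ae_restrict_mem measurableSet_Ioo] with t ht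
    exact (quantile_le_iff ht).2 (((quantile_le_iff ht).1 le_rfl).trans (h _))

theorem measure_Ioi_le_of_forall_gt {μ : Measure ℝ} {a : ℝ} {c : ENNReal}
    (h : ∀ b, a < b → μ (Ici b) ≤ c) : μ (Ioi a) ≤ c := by
  obtain ⟨u, hu_anti, hu_gt, hu_lim⟩ := exists_seq_strictAnti_tendsto a
  have hmono : Monotone fun n => Ici (u n) := fun _ _ hmn =>
    Ici_subset_Ici.2 (hu_anti.antitone hmn)
  rw [← iUnion_Ici_eq_Ioi_of_lt_of_tendsto hu_gt hu_lim, hmono.measure_iUnion]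
  exact iSup_le fun n => h _ (hu_gt n)

theorem le_measure_Ici_of_forall_lt {μ : Measure ℝ} [IsFiniteMeasure μ] {a : ℝ} {c : ENNReal}
    (h : ∀ b < a, c ≤ μ (Ioi b)) : c ≤ μ (Ici a) := by
  obtain ⟨u, hu_mono, hu_lt, hu_lim⟩ := exists_seq_strictMono_tendsto a
  have hanti : Antitone fun n => Ioi (u n) := fun _ _ hmn =>
    Ioi_subset_Ioi (hu_mono.monotone hmn)
  have hinter : ⋂ n, Ioi (u n) = Ici a := by
    rw [← compl_Iio, ← iUnion_Iic_eq_Iio_of_lt_of_tendsto hu_lt hu_lim, compl_iUnion]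
    simp_rw [compl_Iic]
  rw [← hinter, hanti.measure_iInter (fun _ => measurableSet_Ioi.nullMeasurableSet)
    ⟨0, measure_ne_top _ _⟩]
  exact le_iInf fun n => h _ (hu_lt n)

theorem cdf_le_cdf_of_measure_Ici_le {α β : Measure ℝ} [IsProbabilityMeasure α]
    [IsProbabilityMeasure β] (h : ∀ a, α (Ici a) ≤ β (Ici a)) (x : ℝ) : cdf β x ≤ cdf α x := by
  have hIoi : α (Ioi x) ≤ β (Ioi x) :=
    measure_Ioi_le_of_forall_gt fun b hb => (h b).trans (measure_mono (Ici_subset_Ioi.2 hb))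
  rw [← ENNReal.ofReal_le_ofReal_iff (cdf_nonneg α x), ofReal_cdf, ofReal_cdf, ← compl_Ioi,
    prob_compl_eq_one_sub measurableSet_Ioi, prob_compl_eq_one_sub measurableSet_Ioi]
  exact tsub_le_tsub_left hIoi 1

theorem measure_Ici_le_measure_Ioi_of_integral_le {α β : Measure ℝ}
    [IsFiniteMeasure α] [IsFiniteMeasure β]
    (h : ∀ f : ℝ → ℝ, Monotone f → LipschitzWith 1 f → ∫ x, f x ∂α ≤ ∫ x, f x ∂β)
    {a b : ℝ} (hba : b < a) : α (Ici a) ≤ β (Ioi b) := by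
  set f : ℝ → ℝ := fun x => min (max x b) a - b
  have hf_mono : Monotone f := fun x y hxy => by
    dsimp only [f]
    gcongr
  have hf_lip : LipschitzWith 1 f := by
    simpa using ((LipschitzWith.id.max_const b).min_const a).sub (LipschitzWith.const b)
  have hf_nonneg : ∀ x, 0 ≤ f x := fun x => sub_nonneg.2 (le_min (le_max_right x b) hba.le)
  have hf_le : ∀ x, f x ≤ a - b := fun x => sub_le_sub_right (min_le_right _ _) b
  have hf_int : ∀ μ : Measure ℝ, [IsFiniteMeasure μ] → Integrable f μ := fun μ _ =>
    Integrable.of_bound hf_lip.continuous.aestronglyMeasurable (a - b) (ae_of_all _ fun x => by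
      rw [Real.norm_eq_abs, abs_of_nonneg (hf_nonneg x)]
      exact hf_le x)
  have hlower : (Ici a).indicator (fun _ => a - b) ≤ f := fun x => by
    rw [indicator_apply]
    split_ifs with hx
    · simp only [f, min_eq_right (le_max_of_le_left (mem_Ici.1 hx)), le_refl]
    · exact hf_nonneg x
  have hupper : f ≤ (Ioi b).indicator (fun _ => a - b) := fun x => by
    rw [indicator_apply]
    split_ifs with hx
    · exact hf_le x
    · rw [mem_Ioi, not_lt] at hx
      simp only [f, max_eq_right hx, min_eq_left hba.le, sub_self, le_refl]
  have key : α.real (Ici a) * (a - b) ≤ β.real (Ioi b) * (a - b) := by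
    calc α.real (Ici a) * (a - b) = ∫ x, (Ici a).indicator (fun _ => a - b) x ∂α :=
          (integral_indicator_const _ measurableSet_Ici).symm
      _ ≤ ∫ x, f x ∂α := integral_mono ((integrable_const _).indicator measurableSet_Ici)
          (hf_int α) hlower
      _ ≤ ∫ x, f x ∂β := h f hf_mono hf_lip
      _ ≤ ∫ x, (Ioi b).indicator (fun _ => a - b) x ∂β := integral_mono (hf_int β)
          ((integrable_const _).indicator measurableSet_Ioi) hupper
      _ = β.real (Ioi b) * (a - b) := integral_indicator_const _ measurableSet_Ioi
  exact (ENNReal.toReal_le_toReal (measure_ne_top _ _) (measure_ne_top _ _)).1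
    (le_of_mul_le_mul_right key (sub_pos.2 hba))

theorem integral_le_integral_of_W1_le {α β : Measure ℝ} [IsFiniteMeasure α] [IsFiniteMeasure β]
    (hα : Integrable (fun x => x) α) (hβ : Integrable (fun x => x) β)
    (hm : ∫ x, x ∂α ≤ ∫ x, x ∂β) (hW : W1 α β ≤ ENNReal.ofReal (∫ x, x ∂β - ∫ x, x ∂α))
    {f : ℝ → ℝ} (hf_mono : Monotone f) (hf : LipschitzWith 1 f) :
    ∫ x, f x ∂α ≤ ∫ x, f x ∂β := by
  have hg : LipschitzWith 1 fun x => x - 2 * f x := by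
    refine LipschitzWith.of_dist_le_mul fun x y => ?_
    wlog hyx : y ≤ x generalizing x y
    · rw [dist_comm, dist_comm x]
      exact this y x (le_of_not_ge hyx)
    have h0 : 0 ≤ f x - f y := sub_nonneg.2 (hf_mono hyx)
    have h1 : f x - f y ≤ x - y := by
      simpa [Real.dist_eq, abs_of_nonneg h0, abs_of_nonneg (sub_nonneg.2 hyx)]
        using hf.dist_le_mul x y
    rw [NNReal.coe_one, one_mul, Real.dist_eq, Real.dist_eq, abs_of_nonneg (sub_nonneg.2 hyx),
      abs_le]
    constructor <;> linarith
  have hfα := hf.integrable_of_integrable_id hα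
  have hfβ := hf.integrable_of_integrable_id hβ
  have := (ofReal_integral_sub_le_W1 hα hβ hg).trans hW
  rw [ENNReal.ofReal_le_ofReal_iff (sub_nonneg.2 hm), integral_sub hβ (hfβ.const_mul 2),
    integral_sub hα (hfα.const_mul 2), integral_const_mul, integral_const_mul] at this
  linarith

theorem W1_le_ofReal_integral_sub_iff {α β : Measure ℝ} [IsProbabilityMeasure α]
    [IsProbabilityMeasure β] (hα : Integrable (fun x => x) α) (hβ : Integrable (fun x => x) β)
    (hm : ∫ x, x ∂α ≤ ∫ x, x ∂β) :
    W1 α β ≤ ENNReal.ofReal (∫ x, x ∂β - ∫ x, x ∂α) ↔ ∀ a, α (Ici a) ≤ β (Ici a) :=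
  ⟨fun hW _ => le_measure_Ici_of_forall_lt fun _ hb => measure_Ici_le_measure_Ioi_of_integral_le
      (fun _ hf_mono hf => integral_le_integral_of_W1_le hα hβ hm hW hf_mono hf) hb,
    fun h => W1_le_of_cdf_le hα hβ (cdf_le_cdf_of_measure_Ici_le h)⟩

theorem lipschitz_kernel_iff_stochasticDominance_general (μ : Measure ℝ)
    [IsProbabilityMeasure μ]
    (κ : Kernel ℝ ℝ) [IsMarkovKernel κ]
    (hint : ∀ x, Integrable (fun y => y) (κ x))
    (hmart : ∀ᵐ x ∂μ, ∫ y, y ∂(κ x) = x) :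
    (∀ᵐ p ∂(μ.prod μ), W1 (κ p.1) (κ p.2) ≤ ENNReal.ofReal |p.1 - p.2|) ↔
    (∀ᵐ p ∂(μ.prod μ), p.1 ≤ p.2 →
      ∀ a : ℝ, κ p.1 (Set.Ici a) ≤ κ p.2 (Set.Ici a)) := by
  have key : ∀ x y, ∫ z, z ∂(κ x) = x → ∫ z, z ∂(κ y) = y → x ≤ y →
      (W1 (κ x) (κ y) ≤ ENNReal.ofReal |x - y| ↔ ∀ a, κ x (Ici a) ≤ κ y (Ici a)) := by
    intro x y hx hy hxy
    have := W1_le_ofReal_integral_sub_iff (hint x) (hint y) (by rwa [hx, hy])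
    rwa [hx, hy, ← abs_of_nonneg (sub_nonneg.2 hxy), abs_sub_comm] at this
  have hmean : ∀ᵐ p ∂(μ.prod μ), ∫ z, z ∂(κ p.1) = p.1 ∧ ∫ z, z ∂(κ p.2) = p.2 :=
    (Measure.quasiMeasurePreserving_fst.ae hmart).and (Measure.quasiMeasurePreserving_snd.ae hmart)
  constructor
  · intro hW
    filter_upwards [hW, hmean] with p hp ⟨h1, h2⟩ hle using (key _ _ h1 h2 hle).1 hp
  · intro hdom
    filter_upwards [hdom, Measure.measurePreserving_swap.quasiMeasurePreserving.ae hdom, hmean]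
      with p hd hds ⟨h1, h2⟩
    rcases le_total p.1 p.2 with hle | hle
    · exact (key _ _ h1 h2 hle).2 (hd hle)
    · rw [W1_comm, abs_sub_comm]
      exact (key _ _ h2 h1 hle).2 (hds hle)

/-- For a martingale coupling with disintegration `κ`, the kernel is `μ ⊗ μ`-a.e. 1-Lipschitz in
Wasserstein-1 distance if and only if `μ ⊗ μ`-a.e. the kernels are increasing (in `x`) for
first-order stochastic dominance. -/
theorem lipschitz_kernel_iff_stochasticDominance (μ : Measure ℝ)
    [IsProbabilityMeasure μ] (hμ : Integrable (fun y => y) μ)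
    (κ : Kernel ℝ ℝ) [IsMarkovKernel κ]
    (hint : ∀ x, Integrable (fun y => y) (κ x))
    (hmart : ∀ᵐ x ∂μ, ∫ y, y ∂(κ x) = x) :
    (∀ᵐ p ∂(μ.prod μ), W1 (κ p.1) (κ p.2) ≤ ENNReal.ofReal |p.1 - p.2|) ↔
    (∀ᵐ p ∂(μ.prod μ), p.1 ≤ p.2 →
      ∀ a : ℝ, κ p.1 (Set.Ici a) ≤ κ p.2 (Set.Ici a)) :=
  lipschitz_kernel_iff_stochasticDominance_general μ κ hint hmart
end

section
/- Let $X, Y$ be independent real-valued continuous processes on $[s,t]$ defined on a common probability space with $X_s = x < y = Y_s$ almost surely. Let $\tau = \inf\{u \in [s,t] : X_u = Y_u\}$ (with $\tau = \infty$ if the paths never meet) and define $\tilde{X}_u = X_u$ for $u \le \tau$ and $\tilde{X}_u = Y_u$ for $\tau < u \le t$. Then $\tilde{X}_u \le Y_u$ for all $u \in [s,t]$ almost surely. -/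
open MeasureTheory ProbabilityTheory
open scoped Classical

theorem IsPreconnected.le_of_forall_ne {α δ : Type*} [TopologicalSpace α] [LinearOrder δ]
    [TopologicalSpace δ] [OrderClosedTopology δ] {S : Set α} (hS : IsPreconnected S)
    {a b : α} (ha : a ∈ S) (hb : b ∈ S) {f g : α → δ} (hf : ContinuousOn f S)
    (hg : ContinuousOn g S) (hfg : f a ≤ g a) (hne : ∀ r ∈ S, f r ≠ g r) : f b ≤ g b := by
  by_contra! hlt
  obtain ⟨r, hr, hmeet⟩ := hS.intermediate_value₂ ha hb hf hg hfg hlt.le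
  exact hne r hr hmeet

theorem path_swap_coupling_le_general {Ω : Type*} {mΩ : MeasurableSpace Ω} {μ : Measure Ω}
    (s t x y : ℝ) (hxy : x < y)
    (X Y : ℝ → Ω → ℝ)
    (hXcont : ∀ᵐ ω ∂μ, ContinuousOn (fun u => X u ω) (Set.Icc s t))
    (hYcont : ∀ᵐ ω ∂μ, ContinuousOn (fun u => Y u ω) (Set.Icc s t))
    (hXs : ∀ᵐ ω ∂μ, X s ω = x) (hYs : ∀ᵐ ω ∂μ, Y s ω = y) :
    ∀ᵐ ω ∂μ, ∀ u ∈ Set.Icc s t,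
      (if ∃ r ∈ Set.Icc s u, X r ω = Y r ω then Y u ω else X u ω) ≤ Y u ω := by
  filter_upwards [hXcont, hYcont, hXs, hYs] with ω hX hY hXs hYs u hu
  split_ifs with hmeet
  · exact le_rfl
  · have hsub : Set.Icc s u ⊆ Set.Icc s t := Set.Icc_subset_Icc_right hu.2
    exact isPreconnected_Icc.le_of_forall_ne (Set.left_mem_Icc.2 hu.1) (Set.right_mem_Icc.2 hu.1)
      (hX.mono hsub) (hY.mono hsub) (by rw [hXs, hYs]; exact hxy.le)
      fun r hr hr_eq => hmeet ⟨r, hr, hr_eq⟩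

/-- Path-swapping coupling: if `X` and `Y` are independent continuous processes on `[s,t]` with
`X s = x < y = Y s` a.s., and `X̃` follows `X` until the first meeting time of `X` and `Y` and
follows `Y` afterwards, then `X̃ ≤ Y` on `[s,t]` almost surely. -/
theorem path_swap_coupling_le {Ω : Type*} {mΩ : MeasurableSpace Ω} {μ : Measure Ω}
    [IsProbabilityMeasure μ] (s t x y : ℝ) (hst : s ≤ t) (hxy : x < y)
    (X Y : ℝ → Ω → ℝ)
    (hXcont : ∀ᵐ ω ∂μ, ContinuousOn (fun u => X u ω) (Set.Icc s t))
    (hYcont : ∀ᵐ ω ∂μ, ContinuousOn (fun u => Y u ω) (Set.Icc s t))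
    (hXs : ∀ᵐ ω ∂μ, X s ω = x) (hYs : ∀ᵐ ω ∂μ, Y s ω = y)
    (hindep : IndepFun (fun ω => fun u => X u ω) (fun ω => fun u => Y u ω) μ) :
    ∀ᵐ ω ∂μ, ∀ u ∈ Set.Icc s t,
      (if ∃ r ∈ Set.Icc s u, X r ω = Y r ω then Y u ω else X u ω) ≤ Y u ω :=
  path_swap_coupling_le_general (mΩ := mΩ) s t x y hxy X Y hXcont hYcont hXs hYs
end
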